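/- arXiv:2310.17180 — 2 statements merged into one kernel-verified Lean document; each statement's English description precedes it below -/
import Mathlib

section
/- If S is a closed subset of ℝⁿ with continuously differentiable boundary, and h_S : ℝⁿ → ℝ is continuously differentiable with S = {x | h_S(x) ≥ 0}, interior S = {x | h_S(x) > 0}, ∂S = {x | h_S(x) = 0}, and ∇h_S(x) ≠ 0 for x in a neighborhood of ∂S, then for every x ∈ ∂S, the Bouligand tangent cone to S at x equals the half-space {z ∈ ℝⁿ | ∇h_S(x) · z ≥ 0}. -/
open Filter Metric Set

/-- The Bouligand tangent cone to a set `S` at `x`: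
`T_S(x) = {z | liminf_{τ→0⁺} dist(x + τz, S)/τ = 0}`. -/
noncomputable def bouligandTangentCone {E : Type*} [NormedAddCommGroup E] [NormedSpace ℝ E]
    (S : Set E) (x : E) : Set E :=
  {z | Filter.liminf (fun τ : ℝ => Metric.infDist (x + τ • z) S / τ)
      (nhdsWithin 0 (Set.Ioi 0)) = 0}

set_option maxHeartbeats 1000000 in
/-- If `S ⊆ ℝⁿ` is closed with continuously differentiable boundary, described by a
continuously differentiable function `h` with `S = {h ≥ 0}`, `int S = {h > 0}`,
`∂S = {h = 0}` and nonvanishing gradient near `∂S`, then for every `x ∈ ∂S` the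
Bouligand tangent cone to `S` at `x` is the half-space `{z | ∇h(x) · z ≥ 0}`. -/
theorem tangentCone_eq_halfspace (n : ℕ)
    (S : Set (EuclideanSpace ℝ (Fin n))) (h : EuclideanSpace ℝ (Fin n) → ℝ)
    (hSclosed : IsClosed S)
    (hC1 : ContDiff ℝ 1 h)
    (hS_def : S = {x | 0 ≤ h x})
    (hint : interior S = {x | 0 < h x})
    (hbd : frontier S = {x | h x = 0})
    (hgrad : ∃ ε > 0, ∀ x, Metric.infDist x (frontier S) < ε → fderiv ℝ h x ≠ 0) :
    ∀ x ∈ frontier S, bouligandTangentCone S x = {z | 0 ≤ fderiv ℝ h x z} := by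
  obtain ⟨ε, εpos, hgrad⟩ := hgrad
  intro x hx
  have hx0 : h x = 0 := by rw [hbd] at hx; exact hx
  have hxS : x ∈ S := by rw [hS_def]; exact le_of_eq hx0.symm
  have hL : fderiv ℝ h x ≠ 0 := hgrad x (by rw [Metric.infDist_zero_of_mem hx]; exact εpos)
  set L := fderiv ℝ h x with hLdef
  have hdiff : HasFDerivAt h L x := (hC1.differentiable one_ne_zero x).hasFDerivAt
  have hlo : (fun u => h (x + u) - h x - L u) =o[nhds 0] fun u => u :=
    hasFDerivAt_iff_isLittleO_nhds_zero.mp hdiff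
  -- generic facts
  have hne : S.Nonempty := ⟨x, hxS⟩
  -- upper bound f τ ≤ ‖z‖, implying coboundedness
  have hub : ∀ z : EuclideanSpace ℝ (Fin n), ∀ τ : ℝ, τ ∈ Set.Ioi (0:ℝ) →
      Metric.infDist (x + τ • z) S / τ ≤ ‖z‖ := by
    intro z τ hτ
    have hτ' : (0:ℝ) < τ := hτ
    have h1 : Metric.infDist (x + τ • z) S ≤ ‖τ • z‖ := by
      have := Metric.infDist_le_dist_of_mem (x := x + τ • z) hxS
      simpa [dist_eq_norm] using this
    rw [div_le_iff₀ hτ']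
    calc Metric.infDist (x + τ • z) S ≤ ‖τ • z‖ := h1
      _ = τ * ‖z‖ := by rw [norm_smul, Real.norm_eq_abs, abs_of_pos hτ']
      _ = ‖z‖ * τ := mul_comm _ _
  have hubE : ∀ z : EuclideanSpace ℝ (Fin n),
      ∀ᶠ τ in nhdsWithin (0:ℝ) (Set.Ioi 0),
        Metric.infDist (x + τ • z) S / τ ≤ ‖z‖ :=
    fun z => eventually_nhdsWithin_of_forall (hub z)
  ext z
  simp only [bouligandTangentCone, Set.mem_setOf_eq]
  constructor
  · -- cone ⊆ halfspace
    intro hz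
    by_contra hc
    push_neg at hc
    set c : ℝ := L z with hcdef
    have hcneg : c < 0 := hc
    have hzne : z ≠ 0 := by
      intro h0
      rw [h0] at hcdef
      simp [hcdef] at hcneg
    have hznorm : (0:ℝ) < ‖z‖ := norm_pos_iff.mpr hzne
    -- Lipschitz near x
    obtain ⟨K, t, ht, hlip⟩ := (hC1.contDiffAt).exists_lipschitzOnWith
    obtain ⟨δ, δpos, hδ⟩ := Metric.mem_nhds_iff.mp ht
    -- little-o estimate along τ • z
    have htend : Tendsto (fun τ : ℝ => τ • z) (nhdsWithin (0:ℝ) (Set.Ioi 0)) (nhds 0) := by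
      have : Tendsto (fun τ : ℝ => τ • z) (nhds (0:ℝ)) (nhds ((0:ℝ) • z)) :=
        (continuous_id.smul continuous_const).tendsto 0
      simpa using this.mono_left nhdsWithin_le_nhds
    have hε₀ : (0:ℝ) < -c / (2 * ‖z‖) := div_pos (neg_pos.mpr hcneg) (by positivity)
    have hev1 : ∀ᶠ u in nhds (0 : EuclideanSpace ℝ (Fin n)),
        ‖h (x + u) - h x - L u‖ ≤ (-c / (2 * ‖z‖)) * ‖u‖ := hlo.def hε₀
    have hev1' : ∀ᶠ τ in nhdsWithin (0:ℝ) (Set.Ioi 0),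
        ‖h (x + τ • z) - h x - L (τ • z)‖ ≤ (-c / (2 * ‖z‖)) * ‖τ • z‖ :=
      htend.eventually hev1
    -- eventually h (x + τ z) ≤ τ c / 2
    have hev2 : ∀ᶠ τ in nhdsWithin (0:ℝ) (Set.Ioi 0),
        h (x + τ • z) ≤ τ * c / 2 := by
      filter_upwards [hev1', self_mem_nhdsWithin] with τ h1 hτ
      have hτ' : (0:ℝ) < τ := hτ
      have hnorm : ‖τ • z‖ = τ * ‖z‖ := by
        rw [norm_smul, Real.norm_eq_abs, abs_of_pos hτ']
      have hLτ : L (τ • z) = τ * c := by simp [hcdef, mul_comm]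
      rw [hx0, sub_zero, hLτ, hnorm] at h1
      have habs := abs_le.mp (by rwa [Real.norm_eq_abs] at h1)
      have h2 : h (x + τ • z) - τ * c ≤ -c / (2 * ‖z‖) * (τ * ‖z‖) := habs.2
      have h3 : -c / (2 * ‖z‖) * (τ * ‖z‖) = -c * τ / 2 := by
        field_simp
      nlinarith
    -- eventually smallness of τ
    have htendτ : Tendsto (fun τ : ℝ => τ) (nhdsWithin (0:ℝ) (Set.Ioi 0)) (nhds 0) :=
      tendsto_id.mono_left nhdsWithin_le_nhds
    set m : ℝ := -c / (2 * ((K:ℝ) + 1)) with hmdef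
    have hmpos : (0:ℝ) < m := div_pos (neg_pos.mpr hcneg) (by positivity)
    have hev3 : ∀ᶠ τ in nhdsWithin (0:ℝ) (Set.Ioi 0), τ * ‖z‖ < δ / 2 := by
      have : Tendsto (fun τ : ℝ => τ * ‖z‖) (nhdsWithin (0:ℝ) (Set.Ioi 0)) (nhds 0) := by
        simpa using htendτ.mul_const ‖z‖
      exact this.eventually_lt_const (by positivity)
    have hev4 : ∀ᶠ τ in nhdsWithin (0:ℝ) (Set.Ioi 0), τ * m < δ / 2 := by
      have : Tendsto (fun τ : ℝ => τ * m) (nhdsWithin (0:ℝ) (Set.Ioi 0)) (nhds 0) := by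
        simpa using htendτ.mul_const m
      exact this.eventually_lt_const (by positivity)
    -- main lower bound
    have hev5 : ∀ᶠ τ in nhdsWithin (0:ℝ) (Set.Ioi 0),
        m ≤ Metric.infDist (x + τ • z) S / τ := by
      filter_upwards [hev2, hev3, hev4, self_mem_nhdsWithin] with τ h2 h3 h4 hτ
      have hτ' : (0:ℝ) < τ := hτ
      rw [le_div_iff₀ hτ']
      have key : ∀ y ∈ S, m * τ ≤ dist (x + τ • z) y := by
        intro y hy
        by_cases hfar : δ / 2 ≤ dist (x + τ • z) y
        · have : m * τ ≤ δ / 2 := by nlinarith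
          linarith
        · push_neg at hfar
          have hyt : y ∈ t := by
            apply hδ
            rw [Metric.mem_ball]
            have : dist y x ≤ dist y (x + τ • z) + dist (x + τ • z) x := dist_triangle _ _ _
            have hd1 : dist y (x + τ • z) < δ / 2 := by rwa [dist_comm] at hfar
            have hd2 : dist (x + τ • z) x = τ * ‖z‖ := by
              rw [dist_eq_norm]
              simp [norm_smul, abs_of_pos hτ']
            linarith
          have hxt : x + τ • z ∈ t := by
            apply hδ
            rw [Metric.mem_ball, dist_eq_norm]
            have : ‖x + τ • z - x‖ = τ * ‖z‖ := by
              simp [norm_smul, abs_of_pos hτ']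
            rw [this]
            linarith
          have hyS : 0 ≤ h y := by rw [hS_def] at hy; exact hy
          have hlipest : dist (h y) (h (x + τ • z)) ≤ K * dist y (x + τ • z) :=
            hlip.dist_le_mul y hyt (x + τ • z) hxt
          have h5 : h y - h (x + τ • z) ≤ K * dist y (x + τ • z) := by
            have := le_abs_self (h y - h (x + τ • z))
            rw [Real.dist_eq] at hlipest
            linarith
          have h6 : -(τ * c / 2) ≤ (K : ℝ) * dist y (x + τ • z) := by linarith
          have h7 : (K : ℝ) * dist y (x + τ • z) ≤ ((K:ℝ) + 1) * dist y (x + τ • z) := by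
            have := dist_nonneg (x := y) (y := x + τ • z)
            nlinarith
          have h8 : -(τ * c / 2) ≤ ((K:ℝ) + 1) * dist y (x + τ • z) := le_trans h6 h7
          have hK1 : (0:ℝ) < (K:ℝ) + 1 := by positivity
          rw [dist_comm y (x + τ • z)] at h8
          have hmk : m * (((K:ℝ) + 1)) = -c / 2 := by
            rw [hmdef]
            field_simp
          nlinarith [h8, hmk, hK1]
      calc m * τ ≤ Metric.infDist (x + τ • z) S := by
            rw [Metric.infDist_eq_iInf]
            have : Nonempty S := hne.to_subtype
            exact le_ciInf fun ⟨y, hy⟩ => key y hy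
        _ = Metric.infDist (x + τ • z) S := rfl
    -- contradiction with liminf = 0
    have hb := isCoboundedUnder_ge_of_eventually_le _ (hubE z)
    have hfreq := frequently_lt_of_liminf_lt hb (by rw [hz]; exact hmpos)
    obtain ⟨τ, h1, h2⟩ := (hfreq.and_eventually hev5).exists
    linarith
  · -- halfspace ⊆ cone
    intro hz
    -- find w with L w = 1
    obtain ⟨v, hv⟩ : ∃ v, L v ≠ 0 := by
      by_contra hcon
      push_neg at hcon
      exact hL (ContinuousLinearMap.ext fun v => by simp [hcon v])
    set w : EuclideanSpace ℝ (Fin n) := (L v)⁻¹ • v with hwdef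
    have hLw : L w = 1 := by simp [hwdef, inv_mul_cancel₀ hv]
    -- show tendsto 0
    have htendsto : Tendsto (fun τ : ℝ => Metric.infDist (x + τ • z) S / τ)
        (nhdsWithin (0:ℝ) (Set.Ioi 0)) (nhds 0) := by
      rw [NormedAddCommGroup.tendsto_nhds_zero]
      intro ε' hε'
      set η : ℝ := ε' / (2 * (‖w‖ + 1)) with hηdef
      have hηpos : (0:ℝ) < η := by positivity
      set c₀ : ℝ := η / (‖z‖ + η * ‖w‖ + 1) with hc₀def
      have hc₀pos : (0:ℝ) < c₀ := by positivity
      have htendu : Tendsto (fun τ : ℝ => τ • z + (η * τ) • w)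
          (nhdsWithin (0:ℝ) (Set.Ioi 0)) (nhds 0) := by
        have : Tendsto (fun τ : ℝ => τ • z + (η * τ) • w) (nhds (0:ℝ))
            (nhds ((0:ℝ) • z + (η * 0) • w)) := by
          apply Tendsto.add
          · exact (continuous_id.smul continuous_const).tendsto 0
          · exact ((continuous_const.mul continuous_id).smul continuous_const).tendsto 0
        simpa using this.mono_left nhdsWithin_le_nhds
      have hev1 : ∀ᶠ u in nhds (0 : EuclideanSpace ℝ (Fin n)),
          ‖h (x + u) - h x - L u‖ ≤ c₀ * ‖u‖ := hlo.def hc₀pos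
      have hev1' := htendu.eventually hev1
      filter_upwards [hev1', self_mem_nhdsWithin] with τ h1 hτ
      have hτ' : (0:ℝ) < τ := hτ
      set u : EuclideanSpace ℝ (Fin n) := τ • z + (η * τ) • w with hudef
      have hunorm : ‖u‖ ≤ τ * (‖z‖ + η * ‖w‖) := by
        calc ‖u‖ ≤ ‖τ • z‖ + ‖(η * τ) • w‖ := norm_add_le _ _
          _ = τ * ‖z‖ + η * τ * ‖w‖ := by
              rw [norm_smul, norm_smul, Real.norm_eq_abs, Real.norm_eq_abs,
                abs_of_pos hτ', abs_of_pos (by positivity)]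
          _ = τ * (‖z‖ + η * ‖w‖) := by ring
      have hLu : L u = τ * L z + η * τ := by
        simp [hudef, hLw, map_add, map_smul]
      -- h (x + u) ≥ 0
      have hhu : 0 ≤ h (x + u) := by
        rw [hx0, sub_zero] at h1
        have habs := (abs_le.mp (by rwa [Real.norm_eq_abs] at h1)).1
        have hb1 : c₀ * ‖u‖ ≤ c₀ * (τ * (‖z‖ + η * ‖w‖)) :=
          mul_le_mul_of_nonneg_left hunorm (le_of_lt hc₀pos)
        have hb2 : c₀ * (‖z‖ + η * ‖w‖) ≤ η := by
          rw [hc₀def, div_mul_eq_mul_div, div_le_iff₀ (by positivity)]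
          nlinarith [norm_nonneg z, norm_nonneg w]
        have hLz : 0 ≤ τ * L z := by positivity
        nlinarith
      have huS : x + u ∈ S := by rw [hS_def]; exact hhu
      have hdle : Metric.infDist (x + τ • z) S ≤ η * τ * ‖w‖ := by
        have := Metric.infDist_le_dist_of_mem (x := x + τ • z) huS
        have heq : dist (x + τ • z) (x + u) = η * τ * ‖w‖ := by
          rw [dist_eq_norm]
          have : x + τ • z - (x + u) = -((η * τ) • w) := by
            rw [hudef]; abel
          rw [this, norm_neg, norm_smul, Real.norm_eq_abs, abs_of_pos (by positivity)]
        rw [heq] at this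
        exact this
      have hnonneg : 0 ≤ Metric.infDist (x + τ • z) S / τ :=
        div_nonneg Metric.infDist_nonneg (le_of_lt hτ')
      rw [Real.norm_eq_abs, abs_of_nonneg hnonneg, div_lt_iff₀ hτ']
      calc Metric.infDist (x + τ • z) S ≤ η * τ * ‖w‖ := hdle
        _ < ε' * τ := by
            have hkey : η * ‖w‖ < ε' := by
              rw [hηdef, div_mul_eq_mul_div, div_lt_iff₀ (by positivity)]
              nlinarith [norm_nonneg w]
            nlinarith [hkey, hτ']
    exact htendsto.liminf_eq
end

section
/- Consider the double integrator ṗ = v, v̇ = u with u ∈ [−1, 1]. The set S = {(p, v) : p ≥ −p₁ + v²/2 and p ≤ p₁ − v²/2} (for a constant p₁ > 0) is control invariant: for every (p₀, v₀) ∈ S there exists a measurable control u : [0, ∞) → [−1, 1] such that the resulting trajectory stays in S for all t ≥ 0. -/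
open Set

lemma di_key (p₁ p₀ v₀ : ℝ) (hv : 0 < v₀)
    (h1 : -p₁ + v₀ ^ 2 / 2 ≤ p₀) (h2 : p₀ ≤ p₁ - v₀ ^ 2 / 2) :
    ∃ u : ℝ → ℝ, Measurable u ∧ (∀ t, u t ∈ Set.Icc (-1 : ℝ) 1) ∧
      ∃ p v : ℝ → ℝ, p 0 = p₀ ∧ v 0 = v₀ ∧
        (∀ t ≥ (0 : ℝ), HasDerivAt p (v t) t ∧ HasDerivAt v (u t) t) ∧
        ∀ t ≥ (0 : ℝ), -p₁ + (v t) ^ 2 / 2 ≤ p t ∧ p t ≤ p₁ - (v t) ^ 2 / 2 := by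
  set a : ℝ := v₀ / 2 with ha
  have ha0 : a ≠ 0 := by positivity
  set T : ℝ := v₀ with hT
  set P : ℝ := p₀ + v₀ ^ 2 / 2 with hP
  set u : ℝ → ℝ := fun t => if t ≤ T then (-1 : ℝ) else -Real.cos ((t - T) / a) with hu
  set v : ℝ → ℝ := fun t => if t ≤ T then v₀ - t else -a * Real.sin ((t - T) / a) with hvdef
  set p : ℝ → ℝ := fun t => if t ≤ T then p₀ + v₀ * t - t ^ 2 / 2
    else P + a ^ 2 * (Real.cos ((t - T) / a) - 1) with hpdef
  -- derivative of the angle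
  have hθ : ∀ t : ℝ, HasDerivAt (fun s => (s - T) / a) (1 / a) t := by
    intro t
    simpa using ((hasDerivAt_id t).sub_const T).div_const a
  have hv2 : ∀ t : ℝ, HasDerivAt (fun s => -a * Real.sin ((s - T) / a))
      (-Real.cos ((t - T) / a)) t := by
    intro t
    have h := ((Real.hasDerivAt_sin ((t - T) / a)).comp t (hθ t)).const_mul (-a)
    refine h.congr_deriv ?_
    symm
    field_simp
  have hp2 : ∀ t : ℝ, HasDerivAt (fun s => P + a ^ 2 * (Real.cos ((s - T) / a) - 1))
      (-a * Real.sin ((t - T) / a)) t := by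
    intro t
    have h := ((((Real.hasDerivAt_cos ((t - T) / a)).comp t (hθ t)).sub_const 1).const_mul
      (a ^ 2)).const_add P
    refine h.congr_deriv ?_
    symm
    field_simp
  have hv1 : ∀ t : ℝ, HasDerivAt (fun s => v₀ - s) (-1) t := fun t =>
    (hasDerivAt_id t).const_sub v₀
  have hp1 : ∀ t : ℝ, HasDerivAt (fun s => p₀ + v₀ * s - s ^ 2 / 2) (v₀ - t) t := by
    intro t
    have h := (((hasDerivAt_id t).const_mul v₀).const_add p₀).sub
      ((hasDerivAt_pow 2 t).div_const 2)
    refine h.congr_deriv ?_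
    symm
    ring
  refine ⟨u, ?_, ?_, p, v, ?_, ?_, ?_, ?_⟩
  · exact Measurable.ite measurableSet_Iic measurable_const
      (Real.continuous_cos.comp ((continuous_id.sub continuous_const).div_const a)).measurable.neg
  · intro t
    by_cases h : t ≤ T <;> simp [hu, h] <;>
      constructor <;> [skip; skip] <;>
      nlinarith [Real.neg_one_le_cos ((t - T) / a), Real.cos_le_one ((t - T) / a)]
  · simp [hpdef, hv.le, hT, show (0:ℝ) ≤ v₀ from hv.le]
  · simp [hvdef, hv.le, hT, show (0:ℝ) ≤ v₀ from hv.le]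
  · -- derivatives
    intro t ht
    rcases lt_trichotomy t T with hlt | heq | hgt
    · have hmem : Iio T ∈ nhds t := Iio_mem_nhds hlt
      have hvt : v t = v₀ - t := by simp [hvdef, hlt.le]
      have hut : u t = -1 := by simp [hu, hlt.le]
      constructor
      · rw [hvt]
        refine (hp1 t).congr_of_eventuallyEq ?_
        exact Filter.eventuallyEq_of_mem hmem fun s hs => by
          simp [hpdef, (mem_Iio.mp hs).le]
      · rw [hut]
        refine (hv1 t).congr_of_eventuallyEq ?_
        exact Filter.eventuallyEq_of_mem hmem fun s hs => by
          simp [hvdef, (mem_Iio.mp hs).le]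
    · rw [heq]
      have hvt : v T = 0 := by simp [hvdef, hT]
      have hut : u T = -1 := by simp [hu]
      have hpt : p T = P := by simp [hpdef, hP, hT]; ring
      have hvagree : ∀ s ∈ Ici T, v s = -a * Real.sin ((s - T) / a) := by
        intro s hs
        rcases eq_or_lt_of_le (mem_Ici.mp hs) with h | h
        · simp [hvdef, ← h, hT]
        · simp [hvdef, not_le.mpr h]
      have hpagree : ∀ s ∈ Ici T, p s = P + a ^ 2 * (Real.cos ((s - T) / a) - 1) := by
        intro s hs
        rcases eq_or_lt_of_le (mem_Ici.mp hs) with h | h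
        · rw [← h]; simp [hpdef, hP, hT]; ring
        · simp [hpdef, not_le.mpr h]
      constructor
      · rw [hvt]
        have hL : HasDerivWithinAt p 0 (Iic T) T := by
          have h0 : HasDerivWithinAt p (v₀ - T) (Iic T) T := (hp1 T).hasDerivWithinAt.congr
            (fun s hs => by simp [hpdef, mem_Iic.mp hs]) (by simp [hpdef])
          simpa [hT] using h0
        have hR : HasDerivWithinAt p 0 (Ici T) T := by
          have h0 : HasDerivWithinAt p (-a * Real.sin ((T - T) / a)) (Ici T) T :=
            (hp2 T).hasDerivWithinAt.congr hpagree (by rw [hpt]; simp)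
          simpa using h0
        have := hL.union hR
        rwa [Iic_union_Ici, hasDerivWithinAt_univ] at this
      · rw [hut]
        have hL : HasDerivWithinAt v (-1) (Iic T) T :=
          (hv1 T).hasDerivWithinAt.congr
            (fun s hs => by simp [hvdef, mem_Iic.mp hs]) (by simp [hvdef])
        have hR : HasDerivWithinAt v (-1) (Ici T) T := by
          have h0 : HasDerivWithinAt v (-Real.cos ((T - T) / a)) (Ici T) T :=
            (hv2 T).hasDerivWithinAt.congr hvagree (by rw [hvt]; simp)
          simpa using h0
        have := hL.union hR
        rwa [Iic_union_Ici, hasDerivWithinAt_univ] at this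
    · have hmem : Ioi T ∈ nhds t := Ioi_mem_nhds hgt
      have hvt : v t = -a * Real.sin ((t - T) / a) := by
        simp [hvdef, not_le.mpr hgt]
      have hut : u t = -Real.cos ((t - T) / a) := by
        simp [hu, not_le.mpr hgt]
      constructor
      · rw [hvt]
        refine (hp2 t).congr_of_eventuallyEq ?_
        exact Filter.eventuallyEq_of_mem hmem fun s hs => by
          simp [hpdef, not_le.mpr (mem_Ioi.mp hs)]
      · rw [hut]
        refine (hv2 t).congr_of_eventuallyEq ?_
        exact Filter.eventuallyEq_of_mem hmem fun s hs => by
          simp [hvdef, not_le.mpr (mem_Ioi.mp hs)]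
  · -- invariance
    intro t ht
    by_cases hle : t ≤ T
    · have hvt : v t = v₀ - t := by simp [hvdef, hle]
      have hpt : p t = p₀ + v₀ * t - t ^ 2 / 2 := by simp [hpdef, hle]
      rw [hvt, hpt]
      constructor
      · nlinarith [ht, hle]
      · nlinarith
    · push_neg at hle
      have hvt : v t = -a * Real.sin ((t - T) / a) := by simp [hvdef, not_le.mpr hle]
      have hpt : p t = P + a ^ 2 * (Real.cos ((t - T) / a) - 1) := by
        simp [hpdef, not_le.mpr hle]
      rw [hvt, hpt]
      set c := Real.cos ((t - T) / a) with hc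
      set s := Real.sin ((t - T) / a) with hs
      have hsc : s ^ 2 + c ^ 2 = 1 := Real.sin_sq_add_cos_sq _
      have hc1 : c ≤ 1 := Real.cos_le_one _
      have hcm1 : -1 ≤ c := Real.neg_one_le_cos _
      have hPp : P + p₁ ≥ v₀ ^ 2 := by simp [hP]; linarith
      have hPl : P ≤ p₁ := by simp [hP]; linarith
      constructor
      · nlinarith [sq_nonneg (c + 1), sq_nonneg a, sq_nonneg (a * (c+1))]
      · nlinarith [sq_nonneg (c - 1), sq_nonneg (a * (c - 1))]


/-- For the double integrator `ṗ = v, v̇ = u`, `u ∈ [−1,1]`, the set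
`S = {(p,v) : −p₁ + v²/2 ≤ p ≤ p₁ − v²/2}` (with `p₁ > 0`) is control invariant:
from every initial state in `S` there is a measurable admissible control whose
trajectory stays in `S` for all `t ≥ 0`. -/
theorem double_integrator_control_invariant (p₁ : ℝ) (hp₁ : 0 < p₁) :
    ∀ x₀ ∈ {x : ℝ × ℝ | -p₁ + x.2 ^ 2 / 2 ≤ x.1 ∧ x.1 ≤ p₁ - x.2 ^ 2 / 2},
      ∃ u : ℝ → ℝ, Measurable u ∧ (∀ t, u t ∈ Set.Icc (-1 : ℝ) 1) ∧
        ∃ p v : ℝ → ℝ, p 0 = x₀.1 ∧ v 0 = x₀.2 ∧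
          (∀ t ≥ (0 : ℝ), HasDerivAt p (v t) t ∧ HasDerivAt v (u t) t) ∧
          ∀ t ≥ (0 : ℝ),
            (p t, v t) ∈ {x : ℝ × ℝ | -p₁ + x.2 ^ 2 / 2 ≤ x.1 ∧ x.1 ≤ p₁ - x.2 ^ 2 / 2} := by
  rintro ⟨p₀, v₀⟩ ⟨h1, h2⟩
  simp only at h1 h2 ⊢
  rcases lt_trichotomy v₀ 0 with hneg | hzero | hpos
  · -- symmetry: apply the key lemma to (-p₀, -v₀)
    obtain ⟨u, hum, hub, p, v, hp0, hv0, hder, hinv⟩ :=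
      di_key p₁ (-p₀) (-v₀) (by linarith) (by rw [neg_pow]; ring_nf; ring_nf at h2; linarith)
        (by rw [neg_pow]; ring_nf; ring_nf at h1; linarith)
    refine ⟨fun t => -u t, hum.neg, ?_, fun t => -p t, fun t => -v t, by simp [hp0],
      by simp [hv0], ?_, ?_⟩
    · intro t
      have := hub t
      simp only [mem_Icc] at this ⊢
      constructor <;> linarith [this.1, this.2]
    · intro t ht
      exact ⟨((hder t ht).1).neg, ((hder t ht).2).neg⟩
    · intro t ht
      have := hinv t ht
      constructor <;> [nlinarith [this.2]; nlinarith [this.1]]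
  · refine ⟨fun _ => 0, measurable_const, by simp, fun _ => p₀, fun _ => 0, rfl, by simp [hzero],
      fun t _ => ⟨by simpa using hasDerivAt_const t p₀, by simpa using hasDerivAt_const t (0:ℝ)⟩,
      fun t _ => ?_⟩
    subst hzero
    simp at h1 h2 ⊢
    constructor <;> linarith
  · obtain ⟨u, hum, hub, p, v, hp0, hv0, hder, hinv⟩ := di_key p₁ p₀ v₀ hpos h1 h2
    exact ⟨u, hum, hub, p, v, hp0, hv0, hder, fun t ht => hinv t ht⟩
end
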